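/- Let σ̄, σ̃, μ, γ, p̄ > 0 and let R_s > 0 satisfy (1 − γ/R_s)·(R_s·coth R_s − 1)/R_s² = σ̃/(3σ̄). Define σ_s(r) := σ̄(1 − γ/R_s)·R_s·sinh r/(r·sinh R_s) and p_s(r) := −μ·σ_s(r) + (μσ̃/6)·r² + p̄ + μσ̄(1 − γ/R_s) − (μσ̃/6)·R_s² for r ∈ (0, R_s]. Then on (0, R_s]: σ_s''(r) + (2/r)σ_s'(r) = σ_s(r); p_s''(r) + (2/r)p_s'(r) = −μ(σ_s(r) − σ̃); moreover σ_s(R_s) = σ̄(1 − γ/R_s), p_s(R_s) = p̄, and p_s'(R_s) = 0. -/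

import Mathlib

/-- The nutrient component of the radial stationary solution. -/
noncomputable def sigmas (σb γ Rs r : ℝ) : ℝ :=
  σb * (1 - γ / Rs) * (Rs * Real.sinh r) / (r * Real.sinh Rs)

/-- The pressure component of the radial stationary solution. -/
noncomputable def ps (σb σt μ γ pb Rs r : ℝ) : ℝ :=
  -μ * sigmas σb γ Rs r + (μ * σt / 6) * r ^ 2 + pb + μ * σb * (1 - γ / Rs)
    - (μ * σt / 6) * Rs ^ 2

/-!
Writing a radial function as `u = v / r` turns the radial Laplacian `u'' + (2/r) u'` into
`v'' / r`. Here `σ_s = c sinh r / r` with `(c sinh)'' = c sinh`, and near any `r ≠ 0`,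
`p_s = v / r` with `v = -μ c sinh r + (μσ̃/6) r³ + K r`, whose `v''/r` is `-μ σ_s + μσ̃`.
Finally `p_s'(R_s) = -μ σ_s'(R_s) + μσ̃ R_s / 3`, and the relation defining `R_s` says exactly
that `σ_s'(R_s) = σ̃ R_s / 3`.
-/

open Real Filter Topology

section RadialLaplacian

variable {v : ℝ → ℝ} {r : ℝ}

noncomputable def radialLaplacian (u : ℝ → ℝ) (r : ℝ) : ℝ :=
  deriv (deriv u) r + 2 / r * deriv u r

theorem Filter.EventuallyEq.radialLaplacian_eq {u w : ℝ → ℝ} (h : u =ᶠ[𝓝 r] w) :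
    radialLaplacian u r = radialLaplacian w r := by
  rw [radialLaplacian, radialLaplacian, h.deriv.deriv_eq, h.deriv_eq]

theorem HasDerivAt.div_id {v' : ℝ} (hv : HasDerivAt v v' r) (hr : r ≠ 0) :
    HasDerivAt (fun t => v t / t) ((v' * r - v r) / r ^ 2) r := by
  simpa using hv.fun_div (hasDerivAt_id' r) hr

theorem radialLaplacian_div_id {v' : ℝ → ℝ} {v'' : ℝ} (hv : ∀ᶠ t in 𝓝 r, HasDerivAt v (v' t) t)
    (hv' : HasDerivAt v' v'' r) (hr : r ≠ 0) :
    radialLaplacian (fun t => v t / t) r = v'' / r := by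
  have hderiv : deriv (fun t => v t / t) =ᶠ[𝓝 r] fun t => (v' t * t - v t) / t ^ 2 := by
    filter_upwards [hv, eventually_ne_nhds hr] with t hvt ht
    exact (hvt.div_id ht).deriv
  have hderiv2 : HasDerivAt (fun t => (v' t * t - v t) / t ^ 2)
      (((v'' * r + v' r - v' r) * r ^ 2 - (v' r * r - v r) * (2 * r)) / (r ^ 2) ^ 2) r := by
    simpa using ((hv'.fun_mul (hasDerivAt_id' r)).fun_sub hv.self_of_nhds).fun_div
      (hasDerivAt_pow 2 r) (pow_ne_zero 2 hr)
  rw [radialLaplacian, hderiv.deriv_eq, hderiv2.deriv, (hv.self_of_nhds.div_id hr).deriv]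
  field_simp
  ring

end RadialLaplacian

section Stationary

variable (σb σt μ γ pb Rs : ℝ) {r : ℝ}

theorem sigmas_eq_div :
    sigmas σb γ Rs = fun r => σb * (1 - γ / Rs) * Rs / sinh Rs * sinh r / r := by
  funext r
  rw [sigmas]
  ring

-- Only eventually: at `t = 0` the right side is `0` (as `x / 0 = 0`), unlike `ps … 0`.
theorem ps_eventuallyEq_div (hr : r ≠ 0) :
    ps σb σt μ γ pb Rs =ᶠ[𝓝 r] fun t =>
      (-μ * (σb * (1 - γ / Rs) * Rs / sinh Rs * sinh t) + μ * σt / 6 * t ^ 3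
        + (pb + μ * σb * (1 - γ / Rs) - μ * σt / 6 * Rs ^ 2) * t) / t := by
  filter_upwards [eventually_ne_nhds hr] with t ht
  rw [ps, sigmas_eq_div]
  field_simp
  ring

theorem radialLaplacian_sigmas (hr : r ≠ 0) :
    radialLaplacian (sigmas σb γ Rs) r = sigmas σb γ Rs r := by
  set A := σb * (1 - γ / Rs) * Rs / sinh Rs
  rw [sigmas_eq_div, radialLaplacian_div_id (.of_forall fun t => (hasDerivAt_sinh t).const_mul A)
    ((hasDerivAt_cosh r).const_mul A) hr]

theorem radialLaplacian_ps (hr : r ≠ 0) :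
    radialLaplacian (ps σb σt μ γ pb Rs) r = -μ * (sigmas σb γ Rs r - σt) := by
  set A := σb * (1 - γ / Rs) * Rs / sinh Rs
  set K := pb + μ * σb * (1 - γ / Rs) - μ * σt / 6 * Rs ^ 2
  have hv (t : ℝ) : HasDerivAt (fun t => -μ * (A * sinh t) + μ * σt / 6 * t ^ 3 + K * t)
      (-μ * (A * cosh t) + μ * σt / 2 * t ^ 2 + K) t := by
    refine ((((hasDerivAt_sinh t).const_mul A).const_mul (-μ)).fun_add
      ((hasDerivAt_pow 3 t).const_mul (μ * σt / 6))).fun_add ((hasDerivAt_id' t).const_mul K)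
      |>.congr_deriv ?_
    norm_num
    ring
  have hv' : HasDerivAt (fun t => -μ * (A * cosh t) + μ * σt / 2 * t ^ 2 + K)
      (-μ * (A * sinh r) + μ * σt * r) r := by
    refine ((((hasDerivAt_cosh r).const_mul A).const_mul (-μ)).fun_add
      ((hasDerivAt_pow 2 r).const_mul (μ * σt / 2))).add_const K |>.congr_deriv ?_
    norm_num
    ring
  rw [(ps_eventuallyEq_div σb σt μ γ pb Rs hr).radialLaplacian_eq,
    radialLaplacian_div_id (.of_forall hv) hv' hr, sigmas_eq_div]
  field_simp
  ring

theorem sigmas_self (hRs : Rs ≠ 0) : sigmas σb γ Rs Rs = σb * (1 - γ / Rs) := by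
  have : sinh Rs ≠ 0 := sinh_ne_zero.mpr hRs
  rw [sigmas]
  field_simp

theorem ps_self (hRs : Rs ≠ 0) : ps σb σt μ γ pb Rs Rs = pb := by
  rw [ps, sigmas_self σb γ Rs hRs]
  ring

theorem hasDerivAt_sigmas (hr : r ≠ 0) :
    HasDerivAt (sigmas σb γ Rs)
      (σb * (1 - γ / Rs) * Rs / sinh Rs * (r * cosh r - sinh r) / r ^ 2) r := by
  rw [sigmas_eq_div]
  exact ((hasDerivAt_sinh r).const_mul _).div_id hr |>.congr_deriv (by ring)

theorem hasDerivAt_ps (hr : r ≠ 0) :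
    HasDerivAt (ps σb σt μ γ pb Rs)
      (-μ * (σb * (1 - γ / Rs) * Rs / sinh Rs * (r * cosh r - sinh r) / r ^ 2)
        + μ * σt / 3 * r) r := by
  refine (((((hasDerivAt_sigmas σb γ Rs hr).const_mul (-μ)).fun_add
    ((hasDerivAt_pow 2 r).const_mul (μ * σt / 6))).add_const pb).add_const _).sub_const _
    |>.congr_deriv ?_
  norm_num
  ring

theorem deriv_ps_self (hσb : σb ≠ 0) (hRs : Rs ≠ 0)
    (hstat : (1 - γ / Rs) * (Rs * (cosh Rs / sinh Rs) - 1) / Rs ^ 2 = σt / (3 * σb)) :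
    deriv (ps σb σt μ γ pb Rs) Rs = 0 := by
  have : sinh Rs ≠ 0 := sinh_ne_zero.mpr hRs
  rw [(hasDerivAt_ps σb σt μ γ pb Rs hRs).deriv]
  field_simp at hstat ⊢
  linear_combination (-μ) * hstat

end Stationary

theorem stmt1 (σb σt μ γ pb Rs : ℝ)
    (hσb : 0 < σb)
    (hRs : 0 < Rs)
    (hstat : (1 - γ / Rs) * (Rs * (Real.cosh Rs / Real.sinh Rs) - 1) / Rs ^ 2
      = σt / (3 * σb)) :
    (∀ r ∈ Set.Ioc (0 : ℝ) Rs,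
      deriv (deriv (sigmas σb γ Rs)) r + (2 / r) * deriv (sigmas σb γ Rs) r
        = sigmas σb γ Rs r) ∧
    (∀ r ∈ Set.Ioc (0 : ℝ) Rs,
      deriv (deriv (ps σb σt μ γ pb Rs)) r + (2 / r) * deriv (ps σb σt μ γ pb Rs) r
        = -μ * (sigmas σb γ Rs r - σt)) ∧
    sigmas σb γ Rs Rs = σb * (1 - γ / Rs) ∧
    ps σb σt μ γ pb Rs Rs = pb ∧
    deriv (ps σb σt μ γ pb Rs) Rs = 0 :=
  ⟨fun _ hr => radialLaplacian_sigmas σb γ Rs hr.1.ne',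
    fun _ hr => radialLaplacian_ps σb σt μ γ pb Rs hr.1.ne',
    sigmas_self σb γ Rs hRs.ne', ps_self σb σt μ γ pb Rs hRs.ne',
    deriv_ps_self σb σt μ γ pb Rs hσb.ne' hRs.ne' hstat⟩
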